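/- Let D be a positive integer, let G : {1,…,D} × {1,…,D} → ℝ be non-decreasing in each argument, and let ρ ∈ ℝ; write Φ_q(p) for the condition G(q,p) ≥ ρ and, when {p : Φ_q(p)} is nonempty, write p_(q) for its least element. Define a pointer sequence P : {0,1,…,D} → {0,1,…,D} by P(0) = D and, for 1 ≤ q ≤ D, P(q) = the largest m ∈ {0,1,…,P(q−1)} with (m = 0 or ¬Φ_q(m)). Then for every q ∈ {1,…,D}: if {p : Φ_q(p)} is nonempty, then P(q) = p_(q) − 1 and in particular P(q) ≥ p_(q) − 1; and if {p : Φ_q(p)} is empty, then P(q) = D. -/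
import Mathlib


/-- Loop invariant of the frontier search. With `G` non-decreasing
in each argument on the grid `{1,…,D}`, `Φ_q(p) := (G q p ≥ ρ)`, and the pointer
sequence `P` defined by `P 0 = D` and
`P q = the largest m ∈ {0,…,P (q−1)} with (m = 0 ∨ ¬Φ_q m)` for `1 ≤ q ≤ D`:
for every `q ∈ {1,…,D}`, if the feasible set `{p ∈ {1,…,D} : Φ_q p}` is
nonempty with least element `p_(q)`, then `P q = p_(q) − 1` (in particular
`P q ≥ p_(q) − 1`); and if it is empty then `P q = D`. -/
theorem frontier_search_pointer_invariant
    (D : ℕ) (hD : 0 < D) (G : ℕ → ℕ → ℝ) (ρ : ℝ)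
    (hmono₁ : ∀ q₁ ∈ Finset.Icc 1 D, ∀ q₂ ∈ Finset.Icc 1 D, ∀ p ∈ Finset.Icc 1 D,
      q₁ ≤ q₂ → G q₁ p ≤ G q₂ p)
    (hmono₂ : ∀ q ∈ Finset.Icc 1 D, ∀ p₁ ∈ Finset.Icc 1 D, ∀ p₂ ∈ Finset.Icc 1 D,
      p₁ ≤ p₂ → G q p₁ ≤ G q p₂)
    (P : ℕ → ℕ) (hP0 : P 0 = D)
    (hPstep : ∀ q ∈ Finset.Icc 1 D,
      P q = Nat.findGreatest (fun m => m = 0 ∨ ¬ (ρ ≤ G q m)) (P (q - 1))) :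
    ∀ q ∈ Finset.Icc 1 D,
      ((∀ pq : ℕ,
          (pq ∈ Finset.Icc 1 D ∧ ρ ≤ G q pq ∧
            ∀ p ∈ Finset.Icc 1 D, ρ ≤ G q p → pq ≤ p) →
          P q = pq - 1 ∧ pq - 1 ≤ P q) ∧
        ((¬ ∃ p ∈ Finset.Icc 1 D, ρ ≤ G q p) → P q = D)) := by
  classical
  have key : ∀ q, q ≤ D → (P q ≤ D ∧
      (∀ p, P q < p → p ≤ D → ∀ q', q < q' → q' ≤ D → ρ ≤ G q' p)) ∧
      (1 ≤ q →
        ((∀ pq : ℕ,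
          (pq ∈ Finset.Icc 1 D ∧ ρ ≤ G q pq ∧
            ∀ p ∈ Finset.Icc 1 D, ρ ≤ G q p → pq ≤ p) →
          P q = pq - 1 ∧ pq - 1 ≤ P q) ∧
        ((¬ ∃ p ∈ Finset.Icc 1 D, ρ ≤ G q p) → P q = D))) := by
    intro q
    induction q with
    | zero =>
      intro _
      refine ⟨⟨hP0.le, ?_⟩, by omega⟩
      intro p hp hpD q' _ _
      rw [hP0] at hp; omega
    | succ q ih =>
      intro hqD
      obtain ⟨⟨hB, hInv⟩, _⟩ := ih (by omega)
      have hstep := hPstep (q + 1) (Finset.mem_Icc.mpr ⟨by omega, hqD⟩)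
      simp only [Nat.add_sub_cancel] at hstep
      by_cases hex : ∃ p, p ∈ Finset.Icc 1 D ∧ ρ ≤ G (q + 1) p
      · -- feasible set nonempty
        set m := Nat.find hex with hm_def
        have hm := Nat.find_spec hex
        obtain ⟨hm1, hmD⟩ := Finset.mem_Icc.mp hm.1
        -- m - 1 ≤ P q
        have hle : m - 1 ≤ P q := by
          by_contra hcon
          push_neg at hcon
          have hBD : P q + 1 ≤ D := by omega
          have hfeas : ρ ≤ G (q + 1) (P q + 1) :=
            hInv (P q + 1) (by omega) hBD (q + 1) (by omega) hqD
          have : m ≤ P q + 1 :=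
            Nat.find_min' hex ⟨Finset.mem_Icc.mpr ⟨by omega, hBD⟩, hfeas⟩
          omega
        have hPq : P (q + 1) = m - 1 := by
          rw [hstep, Nat.findGreatest_eq_iff]
          refine ⟨hle, ?_, ?_⟩
          · intro hne
            right
            intro hfeas
            exact Nat.find_min hex (show m - 1 < m by omega)
              ⟨Finset.mem_Icc.mpr ⟨by omega, by omega⟩, hfeas⟩
          · rintro k hk hkB (rfl | hnf)
            · omega
            · exact hnf (le_trans hm.2
                (hmono₂ (q + 1) (Finset.mem_Icc.mpr ⟨by omega, hqD⟩)
                  m hm.1 k (Finset.mem_Icc.mpr ⟨by omega, by omega⟩) (by omega)))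
        refine ⟨⟨by omega, ?_⟩, fun _ => ⟨?_, ?_⟩⟩
        · intro p hp hpD q' hq' hq'D
          rw [hPq] at hp
          have h1 : ρ ≤ G (q + 1) p := le_trans hm.2
            (hmono₂ (q + 1) (Finset.mem_Icc.mpr ⟨by omega, hqD⟩)
              m hm.1 p (Finset.mem_Icc.mpr ⟨by omega, hpD⟩) (by omega))
          exact le_trans h1
            (hmono₁ (q + 1) (Finset.mem_Icc.mpr ⟨by omega, hqD⟩)
              q' (Finset.mem_Icc.mpr ⟨by omega, hq'D⟩)
              p (Finset.mem_Icc.mpr ⟨by omega, hpD⟩) (by omega))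
        · rintro pq ⟨hpqmem, hpqfeas, hpqmin⟩
          have h1 : m ≤ pq := Nat.find_min' hex ⟨hpqmem, hpqfeas⟩
          have h2 : pq ≤ m := hpqmin m hm.1 hm.2
          have : pq = m := le_antisymm h2 h1
          subst this
          exact ⟨hPq, hPq.ge⟩
        · intro hempty
          exact absurd hex (by simpa using hempty)
      · -- feasible set empty
        have hPq : P (q + 1) = P q := by
          rw [hstep, Nat.findGreatest_eq_iff]
          refine ⟨le_refl _, ?_, fun k h1 h2 _ => absurd h1 (by omega)⟩
          intro hne
          right
          intro hfeas
          exact hex ⟨P q, Finset.mem_Icc.mpr ⟨by omega, hB⟩, hfeas⟩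
        have hBD : P q = D := by
          by_contra hne
          have hlt : P q < D := lt_of_le_of_ne hB hne
          exact hex ⟨P q + 1, Finset.mem_Icc.mpr ⟨by omega, by omega⟩,
            hInv (P q + 1) (by omega) (by omega) (q + 1) (by omega) hqD⟩
        refine ⟨⟨by omega, ?_⟩, fun _ => ⟨?_, fun _ => hPq.trans hBD⟩⟩
        · intro p hp hpD q' hq' hq'D
          rw [hPq, hBD] at hp; omega
        · rintro pq ⟨hpqmem, hpqfeas, _⟩
          exact absurd ⟨pq, hpqmem, hpqfeas⟩ hex
  intro q hq
  obtain ⟨hq1, hqD⟩ := Finset.mem_Icc.mp hq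
  exact (key q hqD).2 hq1
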